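/- Let G be a bipartite graph, C a map E → {c_1,...,c_k} in which a vertex v_s has a (+c'−c)-deficiency for colors c, c', all other vertices being non-deficient, and suppose there is a color c'' such that no edge of color c'' is incident to v_s. Then the maximal alternating walk with colors c' and c'' starting at v_s does not return to v_s; i.e., it is a path, and flipping colors c' and c'' along it eliminates the deficiency of v_s without creating new deficiencies. -/

import Mathlib

open SimpleGraph

variable {V : Type*}

/-- A proper edge `k`-coloring: distinct edges sharing a vertex receive distinct colors. -/
def IsProperEdgeColoring {k : ℕ} (G : SimpleGraph V) (C : Sym2 V → Fin k) : Prop :=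
  ∀ e₁ ∈ G.edgeSet, ∀ e₂ ∈ G.edgeSet, e₁ ≠ e₂ → (∃ v, v ∈ e₁ ∧ v ∈ e₂) → C e₁ ≠ C e₂

/-- A graph is bipartite if its vertices can be 2-colored with no monochromatic edge. -/
def IsBipartite (G : SimpleGraph V) : Prop :=
  ∃ s : V → Bool, ∀ u v, G.Adj u v → s u ≠ s v

/-- A vertex is deficient if two distinct incident edges share a color. -/
def DeficientAt {k : ℕ} (G : SimpleGraph V) (C : Sym2 V → Fin k) (v : V) : Prop :=
  ∃ e₁ ∈ G.edgeSet, ∃ e₂ ∈ G.edgeSet, e₁ ≠ e₂ ∧ v ∈ e₁ ∧ v ∈ e₂ ∧ C e₁ = C e₂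

/-- `v` has a `(+c−c')`-deficiency: exactly two incident `c`-edges, no incident `c'`-edge,
and all other incident edges pairwise differently colored. -/
def HasDeficiency {k : ℕ} (G : SimpleGraph V) (C : Sym2 V → Fin k) (v : V) (c c' : Fin k) :
    Prop :=
  Set.ncard {e ∈ G.edgeSet | v ∈ e ∧ C e = c} = 2 ∧
  (∀ e ∈ G.edgeSet, v ∈ e → C e ≠ c') ∧
  (∀ e₁ ∈ G.edgeSet, ∀ e₂ ∈ G.edgeSet, v ∈ e₁ → v ∈ e₂ → e₁ ≠ e₂ → C e₁ ≠ c → C e₁ ≠ C e₂)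

/-- An almost edge `k`-coloring: at most two deficient vertices, each with a
`(+c−c')`-type deficiency for some colors. -/
def IsAlmostEdgeColoring {k : ℕ} (G : SimpleGraph V) (C : Sym2 V → Fin k) : Prop :=
  Set.ncard {v | DeficientAt G C v} ≤ 2 ∧
  ∀ v, DeficientAt G C v → ∃ c c', HasDeficiency G C v c c'

/-- An alternating walk with colors `c` and `c'`: every edge is colored `c` or `c'`,
and consecutive edges have different colors. -/
def IsAltWalk {k : ℕ} (G : SimpleGraph V) (C : Sym2 V → Fin k) (c c' : Fin k)
    {u v : V} (w : G.Walk u v) : Prop :=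
  (∀ e ∈ w.edges, C e = c ∨ C e = c') ∧ List.Chain' (fun e f => C e ≠ C f) w.edges

/-- The walk can be extended at its final vertex by a fresh edge of color `c` or `c'`
continuing the alternation. -/
def ExtendableAtEnd {k : ℕ} (G : SimpleGraph V) (C : Sym2 V → Fin k) (c c' : Fin k)
    {u v : V} (w : G.Walk u v) : Prop :=
  ∃ x, G.Adj v x ∧ (C s(v, x) = c ∨ C s(v, x) = c') ∧ s(v, x) ∉ w.edges ∧
    ∀ h : w.edges ≠ [], C s(v, x) ≠ C (w.edges.getLast h)

/-- A maximal alternating walk: alternating and not extendable at either end. -/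
def IsMaximalAltWalk {k : ℕ} (G : SimpleGraph V) (C : Sym2 V → Fin k) (c c' : Fin k)
    {u v : V} (w : G.Walk u v) : Prop :=
  IsAltWalk G C c c' w ∧ ¬ ExtendableAtEnd G C c c' w ∧ ¬ ExtendableAtEnd G C c c' w.reverse

/-- Swap the colors `c` and `c'` on the edges in `S`. -/
noncomputable def flipOn {k : ℕ} (C : Sym2 V → Fin k) (c c' : Fin k) (S : Set (Sym2 V)) :
    Sym2 V → Fin k := fun e =>
  haveI := Classical.dec (e ∈ S)
  if e ∈ S then Equiv.swap c c' (C e) else C e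

/-!
Since `G` is bipartite, a closed walk at `v_s` has even length, so an alternating `c'`/`c''` walk
leaving `v_s` along a `c'`-edge could only come back along a `c''`-edge, and there is none at
`v_s`. Take a longest alternating path from `v_s` starting with a `c'`-edge. It cannot be
extended: a new vertex would give a longer path, `v_s` is excluded by the first part, and an
interior vertex already carries path edges of both colours, so one more would make it deficient.
Hence every vertex `y ≠ v_s` of the path has all its `c'`- and `c''`-edges on the path, and
swapping the two colours along the path keeps the colouring proper at `y`. At `v_s` the path uses
one of the two `c'`-edges, which becomes the missing colour `c''`.
-/

variable {k : ℕ} {G : SimpleGraph V} {C : Sym2 V → Fin k} {c c' : Fin k}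

theorem isProperEdgeColoring_iff_forall_not_deficientAt :
    IsProperEdgeColoring G C ↔ ∀ v, ¬ DeficientAt G C v := by
  constructor
  · rintro h v ⟨e₁, h₁, e₂, h₂, hne, hv₁, hv₂, hC⟩
    exact h e₁ h₁ e₂ h₂ hne ⟨v, hv₁, hv₂⟩ hC
  · rintro h e₁ h₁ e₂ h₂ hne ⟨v, hv₁, hv₂⟩ hC
    exact h v ⟨e₁, h₁, e₂, h₂, hne, hv₁, hv₂, hC⟩

theorem eq_of_not_deficientAt {v : V} {e₁ e₂ : Sym2 V} (hv : ¬ DeficientAt G C v)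
    (h₁ : e₁ ∈ G.edgeSet) (h₂ : e₂ ∈ G.edgeSet) (hv₁ : v ∈ e₁) (hv₂ : v ∈ e₂)
    (hC : C e₁ = C e₂) : e₁ = e₂ :=
  by_contra fun hne => hv ⟨e₁, h₁, e₂, h₂, hne, hv₁, hv₂, hC⟩

theorem IsBipartite.even_length_of_closed (hG : _root_.IsBipartite G) {u : V} (w : G.Walk u u) :
    Even w.length := by
  obtain ⟨s, hs⟩ := hG
  exact (Coloring.even_length_iff_congr (Coloring.mk s fun h => hs _ _ h) w).mpr Iff.rfl

theorem List.apply_getLast_eq_apply_head_iff_odd {α β : Type*} {f : α → β} {a b : β} :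
    ∀ (l : List α), (∀ x ∈ l, f x = a ∨ f x = b) → l.IsChain (fun x y => f x ≠ f y) →
      ∀ h : l ≠ [], (f (l.getLast h) = f (l.head h) ↔ Odd l.length)
  | [], _, _, h => absurd rfl h
  | [_], _, _, _ => by simp
  | x :: y :: l, hab, hchain, _ => by
    have hxy : f x ≠ f y := (List.isChain_cons_cons.mp hchain).1
    have ih := apply_getLast_eq_apply_head_iff_odd (y :: l)
      (fun z hz => hab z (List.mem_cons_of_mem _ hz)) hchain.tail (List.cons_ne_nil _ _)
    have hlast := hab _ (List.mem_cons_of_mem _ (List.getLast_mem (List.cons_ne_nil y l)))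
    rw [List.getLast_cons_cons, List.head_cons, List.length_cons, Nat.odd_add_one, ← ih,
      List.head_cons]
    have hx := hab x (by simp)
    have hy := hab y (by simp)
    grind

namespace SimpleGraph.Walk

theorem IsPath.eq_head_edges_of_mem {u v : V} {w : G.Walk u v} (hw : w.IsPath) {e : Sym2 V}
    (he : e ∈ w.edges) (hu : u ∈ e) : e = w.edges.head (List.ne_nil_of_mem he) := by
  cases w with
  | nil => simp at he
  | cons hadj p =>
    rw [edges_cons, List.mem_cons] at he
    rcases he with rfl | he
    · rfl
    · exact absurd (p.mem_support_of_mem_edges he hu) ((cons_isPath_iff hadj p).mp hw).2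

theorem exists_infix_edges_of_mem_support {u v y : V} {w : G.Walk u v} (hy : y ∈ w.support)
    (hyu : y ≠ u) (hyv : y ≠ v) : ∃ f g, [f, g] <:+: w.edges ∧ y ∈ f ∧ y ∈ g := by
  induction w with
  | nil => exact absurd (List.mem_singleton.mp hy) hyu
  | @cons _ b _ _ p ih =>
    rw [support_cons, List.mem_cons] at hy
    replace hy := hy.resolve_left hyu
    obtain rfl | hyb := eq_or_ne y b
    · cases p with
      | nil => exact absurd rfl hyv
      | cons _ _ => exact ⟨_, _, ⟨[], _, rfl⟩, by simp, by simp⟩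
    · obtain ⟨f, g, hfg, hf, hg⟩ := ih hy hyb hyv
      exact ⟨f, g, hfg.trans (List.suffix_cons _ _).isInfix, hf, hg⟩

theorem exists_isPath_length_maximal [Finite V] {u : V} (P : (x : V) → G.Walk u x → Prop)
    (h : ∃ (x : V) (w : G.Walk u x), w.IsPath ∧ P x w) :
    ∃ (x : V) (w : G.Walk u x), w.IsPath ∧ P x w ∧
      ∀ (y : V) (w' : G.Walk u y), w'.IsPath → P y w' → w'.length ≤ w.length := by
  have : Fintype V := Fintype.ofFinite V
  set L : Set ℕ := {n | ∃ (x : V) (w : G.Walk u x), w.IsPath ∧ P x w ∧ w.length = n}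
  have hbdd : BddAbove L := ⟨Fintype.card V, by rintro _ ⟨x, w, hw, -, rfl⟩; exact hw.length_lt.le⟩
  obtain ⟨x, w, hw, hP⟩ := h
  obtain ⟨x, w, hw, hP, hlen⟩ := Nat.sSup_mem (s := L) ⟨_, x, w, hw, hP, rfl⟩ hbdd
  exact ⟨x, w, hw, hP, fun y w' hw' hP' => hlen ▸ le_csSup hbdd ⟨y, w', hw', hP', rfl⟩⟩

end SimpleGraph.Walk

section AlternatingWalk

variable {u v : V} {w : G.Walk u v}

theorem IsAltWalk.of_infix {u' v' : V} {w' : G.Walk u' v'} (halt : IsAltWalk G C c c' w)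
    (h : w'.edges <:+: w.edges) : IsAltWalk G C c c' w' :=
  ⟨fun e he => halt.1 e (h.subset he), List.IsChain.infix halt.2 h⟩

theorem IsAltWalk.concat (halt : IsAltWalk G C c c' w) {z : V} (hadj : G.Adj v z)
    (hcol : C s(v, z) = c ∨ C s(v, z) = c')
    (hlast : ∀ h : w.edges ≠ [], C s(v, z) ≠ C (w.edges.getLast h)) :
    IsAltWalk G C c c' (w.concat hadj) := by
  rw [IsAltWalk, Walk.edges_concat, List.concat_eq_append]
  refine ⟨fun e he => ?_, List.IsChain.append halt.2 (List.isChain_singleton _) ?_⟩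
  · rcases List.mem_append.mp he with he | he
    · exact halt.1 e he
    · rw [List.mem_singleton.mp he]; exact hcol
  · intro x hx y hy
    simp only [List.head?_cons, Option.mem_def, Option.some.injEq] at hy
    rw [← List.getLast_of_mem_getLast? hx, ← hy]
    exact (hlast _).symm

theorem IsAltWalk.start_not_mem_support_tail (hG : _root_.IsBipartite G)
    (hc' : ∀ f ∈ G.edgeSet, u ∈ f → C f ≠ c') (halt : IsAltWalk G C c c' w)
    (hhead : ∀ h : w.edges ≠ [], C (w.edges.head h) = c) : u ∉ w.support.tail := by
  classical
  intro hu
  cases w with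
  | nil => simp at hu
  | @cons _ b _ hadj p =>
    rw [Walk.support_cons, List.tail_cons] at hu
    set q : G.Walk u u := Walk.cons hadj (p.takeUntil u hu)
    have hq : IsAltWalk G C c c' q := halt.of_infix
      ((List.prefix_cons_inj _).mpr (p.edges_takeUntil_prefix_edges hu)).isInfix
    have hne : q.edges ≠ [] := by simp [q]
    have hqhead : C (q.edges.head hne) = c := by simpa [q] using hhead (by simp)
    have hqlast : C (q.edges.getLast hne) ≠ c := fun h =>
      Nat.not_odd_iff_even.mpr (by simpa using hG.even_length_of_closed q)
        ((List.apply_getLast_eq_apply_head_iff_odd _ hq.1 hq.2 hne).mp (h.trans hqhead.symm))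
    exact hc' _ (q.edges_subset_edgeSet (List.getLast_mem hne)) (by simp)
      ((hq.1 _ (List.getLast_mem hne)).resolve_left hqlast)

theorem IsAltWalk.mem_edges_of_mem_support_of_ne (halt : IsAltWalk G C c c' w) {y : V}
    (hy : ¬ DeficientAt G C y) (hsupp : y ∈ w.support) (hyu : y ≠ u) (hyv : y ≠ v)
    {g : Sym2 V} (hg : g ∈ G.edgeSet) (hyg : y ∈ g) (hcol : C g = c ∨ C g = c') :
    g ∈ w.edges := by
  obtain ⟨f, f', hinf, hyf, hyf'⟩ := Walk.exists_infix_edges_of_mem_support hsupp hyu hyv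
  have hff' : C f ≠ C f' :=
    (List.isChain_pair (R := fun e f => C e ≠ C f)).mp (List.IsChain.infix halt.2 hinf)
  have hf : f ∈ w.edges := hinf.subset (by simp)
  have hf' : f' ∈ w.edges := hinf.subset (by simp)
  have hcolf := halt.1 f hf
  have hcolf' := halt.1 f' hf'
  have hg_eq : C g = C f ∨ C g = C f' := by grind
  rcases hg_eq with h | h
  · rwa [eq_of_not_deficientAt hy hg (w.edges_subset_edgeSet hf) hyg hyf h]
  · rwa [eq_of_not_deficientAt hy hg (w.edges_subset_edgeSet hf') hyg hyf' h]

theorem mem_edges_of_not_extendableAtEnd (hend : ¬ ExtendableAtEnd G C c c' w)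
    (hv : ¬ DeficientAt G C v) {g : Sym2 V} (hg : g ∈ G.edgeSet) (hvg : v ∈ g)
    (hcol : C g = c ∨ C g = c') : g ∈ w.edges := by
  by_contra hgw
  obtain ⟨z, rfl⟩ := Sym2.mem_iff_exists.mp hvg
  refine hend ⟨z, hg, hcol, hgw, fun h hC => hgw ?_⟩
  rw [eq_of_not_deficientAt hv hg (w.edges_subset_edgeSet (List.getLast_mem h))
    (Sym2.mem_mk_left _ _) (by simp) hC]
  exact List.getLast_mem h

theorem IsAltWalk.mem_edges_of_mem_support (halt : IsAltWalk G C c c' w)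
    (hend : ¬ ExtendableAtEnd G C c c' w) {y : V} (hy : ¬ DeficientAt G C y)
    (hsupp : y ∈ w.support) (hyu : y ≠ u) {g : Sym2 V} (hg : g ∈ G.edgeSet) (hyg : y ∈ g)
    (hcol : C g = c ∨ C g = c') : g ∈ w.edges := by
  obtain rfl | hyv := eq_or_ne y v
  · exact mem_edges_of_not_extendableAtEnd hend hy hg hyg hcol
  · exact halt.mem_edges_of_mem_support_of_ne hy hsupp hyu hyv hg hyg hcol

theorem IsAltWalk.not_extendableAtEnd_of_maximal (hG : _root_.IsBipartite G)
    (hc' : ∀ f ∈ G.edgeSet, u ∈ f → C f ≠ c') (hnd : ∀ y, y ≠ u → ¬ DeficientAt G C y)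
    (hw : w.IsPath) (halt : IsAltWalk G C c c' w) (hne : w.edges ≠ [])
    (hhead : ∀ h : w.edges ≠ [], C (w.edges.head h) = c)
    (hmax : ∀ (y : V) (w' : G.Walk u y), w'.IsPath → IsAltWalk G C c c' w' → w'.edges ≠ [] →
      (∀ h : w'.edges ≠ [], C (w'.edges.head h) = c) → w'.length ≤ w.length) :
    ¬ ExtendableAtEnd G C c c' w := by
  rintro ⟨z, hadj, hcol, hfresh, hlast⟩
  have halt' := halt.concat hadj hcol hlast
  have hne' : (w.concat hadj).edges ≠ [] := by simp [Walk.edges_concat]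
  have hhead' : ∀ h : (w.concat hadj).edges ≠ [], C ((w.concat hadj).edges.head h) = c := by
    intro h
    simpa [Walk.edges_concat, List.head_append_of_ne_nil hne] using hhead hne
  by_cases hz : z ∈ w.support
  · obtain rfl | hzu := eq_or_ne z u
    · exact halt'.start_not_mem_support_tail hG hc' hhead' (by simp [Walk.support_concat])
    · exact hfresh (halt.mem_edges_of_mem_support_of_ne (hnd z hzu) hz hzu hadj.ne'
        (G.mem_edgeSet.mpr hadj) (Sym2.mem_mk_right _ _) hcol)
  · have := hmax z _ (hw.concat hz hadj) halt' hne' hhead'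
    simp at this

theorem not_extendableAtEnd_reverse (hc' : ∀ f ∈ G.edgeSet, u ∈ f → C f ≠ c')
    (hne : w.edges ≠ []) (hhead : C (w.edges.head hne) = c) :
    ¬ ExtendableAtEnd G C c c' w.reverse := by
  rintro ⟨z, hadj, hcol, -, hlast⟩
  have hrev : w.reverse.edges ≠ [] := by simpa using hne
  have hlast_rev : w.reverse.edges.getLast hrev = w.edges.head hne := by
    simp [Walk.edges_reverse, List.getLast_reverse]
  rcases hcol with h | h
  · exact hlast hrev (by rw [hlast_rev, hhead, h])
  · exact hc' _ (G.mem_edgeSet.mpr hadj) (Sym2.mem_mk_left _ _) h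

end AlternatingWalk

section Flip

variable {S : Set (Sym2 V)} {e : Sym2 V}

theorem flipOn_of_mem (he : e ∈ S) : flipOn C c c' S e = Equiv.swap c c' (C e) := by
  simp [flipOn, he]

theorem flipOn_of_not_mem (he : e ∉ S) : flipOn C c c' S e = C e := by
  simp [flipOn, he]

theorem not_deficientAt_flipOn {y : V} (hy : ¬ DeficientAt G C y)
    (hS : ∀ e ∈ S, ∀ g ∈ G.edgeSet, g ∉ S → y ∈ e → y ∈ g → C g ≠ Equiv.swap c c' (C e)) :
    ¬ DeficientAt G (flipOn C c c' S) y := by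
  rintro ⟨e₁, h₁, e₂, h₂, hne, hy₁, hy₂, hC⟩
  by_cases m₁ : e₁ ∈ S <;> by_cases m₂ : e₂ ∈ S
  · rw [flipOn_of_mem m₁, flipOn_of_mem m₂] at hC
    exact hy ⟨e₁, h₁, e₂, h₂, hne, hy₁, hy₂, Equiv.injective _ hC⟩
  · rw [flipOn_of_mem m₁, flipOn_of_not_mem m₂] at hC
    exact hS e₁ m₁ e₂ h₂ m₂ hy₁ hy₂ hC.symm
  · rw [flipOn_of_not_mem m₁, flipOn_of_mem m₂] at hC
    exact hS e₂ m₂ e₁ h₁ m₁ hy₂ hy₁ hC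
  · rw [flipOn_of_not_mem m₁, flipOn_of_not_mem m₂] at hC
    exact hy ⟨e₁, h₁, e₂, h₂, hne, hy₁, hy₂, hC⟩

variable {u v : V} {w : G.Walk u v}

theorem IsAltWalk.not_deficientAt_flipOn (halt : IsAltWalk G C c c' w)
    (hend : ¬ ExtendableAtEnd G C c c' w) {y : V} (hy : ¬ DeficientAt G C y) (hyu : y ≠ u) :
    ¬ DeficientAt G (flipOn C c c' {e | e ∈ w.edges}) y := by
  refine _root_.not_deficientAt_flipOn hy fun e he g hg hgw hye hyg hC => hgw ?_
  refine halt.mem_edges_of_mem_support hend hy (w.mem_support_of_mem_edges he hye) hyu hg hyg ?_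
  rcases halt.1 e he with h | h <;> simp [hC, h]

theorem not_deficientAt_flipOn_start {d : Fin k} (hdef : HasDeficiency G C u c d)
    (hc' : ∀ f ∈ G.edgeSet, u ∈ f → C f ≠ c') (hw : w.IsPath) (hne : w.edges ≠ [])
    (hhead : C (w.edges.head hne) = c) :
    ¬ DeficientAt G (flipOn C c c' {e | e ∈ w.edges}) u := by
  have hin : ∀ e ∈ w.edges, u ∈ e → e = w.edges.head hne := fun e he hue =>
    hw.eq_head_edges_of_mem he hue
  have hflip : ∀ e ∈ w.edges, u ∈ e → flipOn C c c' {e | e ∈ w.edges} e = c' := fun e he hue => by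
    rw [flipOn_of_mem he, hin e he hue, hhead, Equiv.swap_apply_left]
  rintro ⟨e₁, h₁, e₂, h₂, hne₁₂, hu₁, hu₂, hC⟩
  by_cases m₁ : e₁ ∈ w.edges
  · have m₂ : e₂ ∉ w.edges := fun m₂ => hne₁₂ ((hin e₁ m₁ hu₁).trans (hin e₂ m₂ hu₂).symm)
    rw [hflip e₁ m₁ hu₁, flipOn_of_not_mem m₂] at hC
    exact hc' e₂ h₂ hu₂ hC.symm
  by_cases m₂ : e₂ ∈ w.edges
  · rw [hflip e₂ m₂ hu₂, flipOn_of_not_mem m₁] at hC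
    exact hc' e₁ h₁ hu₁ hC
  rw [flipOn_of_not_mem m₁, flipOn_of_not_mem m₂] at hC
  by_cases hc : C e₁ = c
  swap
  · exact hdef.2.2 e₁ h₁ e₂ h₂ hu₁ hu₂ hne₁₂ hc hC
  set e₀ := w.edges.head hne
  have h₀ : e₀ ∈ w.edges := List.head_mem hne
  have hthree : ({e₀, e₁, e₂} : Set (Sym2 V)).ncard = 3 := Set.ncard_eq_three.mpr
    ⟨e₀, e₁, e₂, fun h => m₁ (h ▸ h₀), fun h => m₂ (h ▸ h₀), hne₁₂, rfl⟩
  have hsub : ({e₀, e₁, e₂} : Set (Sym2 V)) ⊆ {e ∈ G.edgeSet | u ∈ e ∧ C e = c} := by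
    rintro e (rfl | rfl | rfl)
    · exact ⟨w.edges_subset_edgeSet h₀, by simp [e₀], hhead⟩
    · exact ⟨h₁, hu₁, hc⟩
    · exact ⟨h₂, hu₂, hC ▸ hc⟩
  have := Set.ncard_le_ncard hsub (Set.finite_of_ncard_ne_zero (by rw [hdef.1]; simp))
  rw [hthree, hdef.1] at this
  omega

end Flip

theorem stmt17_general [Fintype V] {k : ℕ} (G : SimpleGraph V) (hbip : _root_.IsBipartite G)
    (C : Sym2 V → Fin k) (v_s : V) (c c' c'' : Fin k)
    (hdef : HasDeficiency G C v_s c' c)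
    (hothers : ∀ w, DeficientAt G C w → w = v_s)
    (hc'' : ∀ f ∈ G.edgeSet, v_s ∈ f → C f ≠ c'') :
    (∀ (x : V) (w : G.Walk v_s x), IsAltWalk G C c' c'' w →
        (∀ h : w.edges ≠ [], C (w.edges.head h) = c') → v_s ∉ w.support.tail) ∧
    (∃ (x : V) (w : G.Walk v_s x), IsMaximalAltWalk G C c' c'' w ∧ w.IsPath ∧
        w.edges ≠ [] ∧ (∀ h : w.edges ≠ [], C (w.edges.head h) = c') ∧
        IsProperEdgeColoring G (flipOn C c' c'' {e | e ∈ w.edges})) := by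
  have hnd : ∀ y, y ≠ v_s → ¬ DeficientAt G C y := fun y hy h => hy (hothers y h)
  have hedge : ∃ (x : V) (w : G.Walk v_s x), w.IsPath ∧ (IsAltWalk G C c' c'' w ∧
      w.edges ≠ [] ∧ ∀ h : w.edges ≠ [], C (w.edges.head h) = c') := by
    obtain ⟨e, he, hue, hce⟩ := Set.nonempty_of_ncard_ne_zero (by rw [hdef.1]; simp)
    obtain ⟨z, rfl⟩ := Sym2.mem_iff_exists.mp hue
    have hadj : G.Adj v_s z := he
    exact ⟨z, hadj.toWalk, hadj.isPath_toWalk, ⟨by simp [hce], List.isChain_singleton _⟩,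
      by simp, by simp [hce]⟩
  obtain ⟨x, w, hw, ⟨halt, hne, hhead⟩, hmax⟩ := Walk.exists_isPath_length_maximal _ hedge
  have hend := halt.not_extendableAtEnd_of_maximal hbip hc'' hnd hw hne hhead
    fun y w' hw' halt' hne' hhead' => hmax y w' hw' ⟨halt', hne', hhead'⟩
  refine ⟨fun x w halt hhead => halt.start_not_mem_support_tail hbip hc'' hhead, x, w,
    ⟨halt, hend, not_extendableAtEnd_reverse hc'' hne (hhead hne)⟩, hw, hne, hhead, ?_⟩
  rw [isProperEdgeColoring_iff_forall_not_deficientAt]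
  intro y
  obtain rfl | hy := eq_or_ne y v_s
  · exact not_deficientAt_flipOn_start hdef hc'' hw hne (hhead hne)
  · exact halt.not_deficientAt_flipOn hend (hnd y hy) hy

/-- If `v_s` has a `(+c'−c)`-deficiency, all other vertices are non-deficient,
and no `c''`-edge is incident to `v_s`, then (a) a maximal alternating walk with colors `c'`
and `c''` starting at `v_s` with a `c'`-edge never returns to `v_s`, and (b) there is such a
maximal alternating path, and swapping `c'` and `c''` along it eliminates the deficiency of
`v_s` without creating new deficiencies, i.e., yields a proper edge coloring. -/
theorem stmt17 [Fintype V] {k : ℕ} (G : SimpleGraph V) (hbip : _root_.IsBipartite G)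
    (C : Sym2 V → Fin k) (v_s : V) (c c' c'' : Fin k)
    (hdef : HasDeficiency G C v_s c' c)
    (hothers : ∀ w, DeficientAt G C w → w = v_s)
    (hc'' : ∀ f ∈ G.edgeSet, v_s ∈ f → C f ≠ c'')
    (h1 : c'' ≠ c') (h2 : c'' ≠ c) :
    (∀ (x : V) (w : G.Walk v_s x), IsAltWalk G C c' c'' w →
        (∀ h : w.edges ≠ [], C (w.edges.head h) = c') → v_s ∉ w.support.tail) ∧
    (∃ (x : V) (w : G.Walk v_s x), IsMaximalAltWalk G C c' c'' w ∧ w.IsPath ∧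
        w.edges ≠ [] ∧ (∀ h : w.edges ≠ [], C (w.edges.head h) = c') ∧
        IsProperEdgeColoring G (flipOn C c' c'' {e | e ∈ w.edges})) :=
  stmt17_general G hbip C v_s c c' c'' hdef hothers hc''
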